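/- Fix x ∈ ℝⁿ, assume every node has degree mᵢ ≥ 1 and F has full column rank, and let ρ₀ ∈ (0,1). Then the function ρ ↦ T(x,ρ) is differentiable at ρ₀ with derivative equal to −s(ρ₀)ᵀ W s(ρ₀), where s(ρ₀) = [Iₙ − F(Fᵀ(D−ρ₀W)F)⁻¹Fᵀ(D−ρ₀W)]x. -/

import Mathlib

/-
With `R(ρ) = D - ρW` and the generalized least-squares projection `P = F (Fᵀ R F)⁻¹ Fᵀ R`,
one has `K = (I - P)ᵀ R (I - P)`, so `T(ρ) = sᵀ R s` with `s = (I - P) x = x - F β(ρ)`.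
Differentiating, `T' = 2 s'ᵀ R s - sᵀ W s`, and the first term vanishes (an envelope argument):
`s' = -F β'` lies in the column space of `F`, which is `R`-orthogonal to `s` by the normal
equations `Fᵀ R s = 0`. These need `Fᵀ R F` invertible, which holds because `F` is injective and
`R = (1 - ρ) D + ρ (D - W)` is positive definite, `D - W` being a graph Laplacian; Cramer's rule
then makes `β` differentiable.
-/

open Matrix

/-- Degree of node `i`: `mᵢ = ∑ⱼ Wᵢⱼ`. -/
noncomputable def degVec {n : ℕ} (W : Matrix (Fin n) (Fin n) ℝ) (i : Fin n) : ℝ := ∑ j, W i j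

/-- `R(ρ) = D - ρ W` where `D = diag(m₁,…,mₙ)`. -/
noncomputable def Rmat {n : ℕ} (W : Matrix (Fin n) (Fin n) ℝ) (ρ : ℝ) :
    Matrix (Fin n) (Fin n) ℝ :=
  Matrix.diagonal (degVec W) - ρ • W

/-- `K(ρ) = (D-ρW) - (D-ρW)F[Fᵀ(D-ρW)F]⁻¹Fᵀ(D-ρW)`. -/
noncomputable def Kmat {n p : ℕ} (W : Matrix (Fin n) (Fin n) ℝ)
    (F : Matrix (Fin n) (Fin (p + 1)) ℝ) (ρ : ℝ) : Matrix (Fin n) (Fin n) ℝ :=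
  Rmat W ρ - Rmat W ρ * F * (Fᵀ * Rmat W ρ * F)⁻¹ * Fᵀ * Rmat W ρ

/-- `T(x,ρ) = xᵀ K(ρ) x`. -/
noncomputable def Tcrit {n p : ℕ} (W : Matrix (Fin n) (Fin n) ℝ)
    (F : Matrix (Fin n) (Fin (p + 1)) ℝ) (x : Fin n → ℝ) (ρ : ℝ) : ℝ :=
  x ⬝ᵥ (Kmat W F ρ).mulVec x


/-- The residual vector `s(ρ) = [Iₙ - F(Fᵀ(D-ρW)F)⁻¹Fᵀ(D-ρW)]x`. -/
noncomputable def sresid {n p : ℕ} (W : Matrix (Fin n) (Fin n) ℝ)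
    (F : Matrix (Fin n) (Fin (p + 1)) ℝ) (x : Fin n → ℝ) (ρ : ℝ) : Fin n → ℝ :=
  ((1 : Matrix (Fin n) (Fin n) ℝ) - F * (Fᵀ * Rmat W ρ * F)⁻¹ * Fᵀ * Rmat W ρ).mulVec x

namespace Matrix

theorem mulVec_injective_of_rank_eq_card {ι κ K : Type*} [Fintype κ] [Field K] {A : Matrix ι κ K}
    (h : A.rank = Fintype.card κ) : Function.Injective A.mulVec := by
  have rank_nullity := LinearMap.finrank_range_add_finrank_ker A.mulVecLin
  rw [← Matrix.rank, h, Module.finrank_fintype_fun_eq_card] at rank_nullity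
  have : LinearMap.ker A.mulVecLin = ⊥ := Submodule.finrank_eq_zero.mp (by omega)
  exact LinearMap.ker_eq_bot.mp this

variable {ι : Type*} [Fintype ι]

theorem dotProduct_mulVec_comm_of_transpose_eq {α : Type*} [CommSemiring α] {R : Matrix ι ι α}
    (hR : Rᵀ = R) (u v : ι → α) : u ⬝ᵥ R *ᵥ v = v ⬝ᵥ R *ᵥ u := by
  rw [dotProduct_mulVec, ← mulVec_transpose, hR, dotProduct_comm]

theorem posSemidef_diagonal_sum_sub [DecidableEq ι] {W : Matrix ι ι ℝ} (hW : W.IsSymm)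
    (hW₀ : ∀ i j, 0 ≤ W i j) :
    (diagonal (fun i => ∑ j, W i j) - W).PosSemidef := by
  refine .of_dotProduct_mulVec_nonneg ?_ fun v => ?_
  · simp [IsSymm, transpose_sub, hW.eq]
  have laplacian_form : 2 * (v ⬝ᵥ (diagonal (fun i => ∑ j, W i j) - W) *ᵥ v)
      = ∑ i, ∑ j, W i j * (v i - v j) ^ 2 := by
    have swap : ∑ i, ∑ j, W i j * v j ^ 2 = ∑ i, ∑ j, W i j * v i ^ 2 := by
      rw [Finset.sum_comm]; simp_rw [hW.apply]
    have expand : ∑ i, ∑ j, W i j * (v i - v j) ^ 2 = ∑ i, ∑ j, W i j * v i ^ 2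
        + ∑ i, ∑ j, W i j * v j ^ 2 - 2 * ∑ i, ∑ j, v i * (W i j * v j) := by
      simp only [Finset.mul_sum, ← Finset.sum_add_distrib, ← Finset.sum_sub_distrib]
      exact Finset.sum_congr rfl fun i _ => Finset.sum_congr rfl fun j _ => by ring
    have diag : v ⬝ᵥ diagonal (fun i => ∑ j, W i j) *ᵥ v = ∑ i, ∑ j, W i j * v i ^ 2 := by
      simp only [dotProduct, mulVec_diagonal, Finset.mul_sum, Finset.sum_mul]
      exact Finset.sum_congr rfl fun i _ => Finset.sum_congr rfl fun j _ => by ring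
    have off : v ⬝ᵥ W *ᵥ v = ∑ i, ∑ j, v i * (W i j * v j) := by
      simp only [dotProduct, mulVec, Finset.mul_sum]
    rw [expand, swap, sub_mulVec, dotProduct_sub, diag, off]
    ring
  have : 0 ≤ ∑ i, ∑ j, W i j * (v i - v j) ^ 2 :=
    Finset.sum_nonneg fun i _ => Finset.sum_nonneg fun j _ => by have := hW₀ i j; positivity
  simp only [star_trivial]
  linarith

end Matrix

section GLS

variable {ι κ α : Type*} [Fintype ι] [Fintype κ] [DecidableEq κ] [CommRing α]

noncomputable def glsProj (R : Matrix ι ι α) (F : Matrix ι κ α) : Matrix ι ι α :=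
  F * (Fᵀ * R * F)⁻¹ * Fᵀ * R

theorem transpose_mul_mul_one_sub_glsProj [DecidableEq ι] {R : Matrix ι ι α} {F : Matrix ι κ α}
    (hB : IsUnit (Fᵀ * R * F).det) : Fᵀ * R * (1 - glsProj R F) = 0 := by
  have : Fᵀ * R * glsProj R F = Fᵀ * R := by
    simp only [glsProj, ← Matrix.mul_assoc, mul_nonsing_inv _ hB, Matrix.one_mul]
  rw [Matrix.mul_sub, Matrix.mul_one, this, sub_self]

-- No invertibility is needed: if `Fᵀ R F` is singular, its `⁻¹` is `0` and both sides are `R`.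
theorem sub_mul_glsProj_eq [DecidableEq ι] {R : Matrix ι ι α} (hR : Rᵀ = R) (F : Matrix ι κ α) :
    R - R * glsProj R F = (1 - glsProj R F)ᵀ * R * (1 - glsProj R F) := by
  by_cases hB : IsUnit (Fᵀ * R * F).det
  · have hPt : (glsProj R F)ᵀ = R * F * (Fᵀ * R * F)⁻¹ * Fᵀ := by
      simp only [glsProj, transpose_mul, transpose_nonsing_inv, transpose_transpose, hR,
        Matrix.mul_assoc]
    have hPtR : (glsProj R F)ᵀ * R * (1 - glsProj R F) = 0 := by
      rw [hPt, show R * F * (Fᵀ * R * F)⁻¹ * Fᵀ * R * (1 - glsProj R F)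
        = R * F * (Fᵀ * R * F)⁻¹ * (Fᵀ * R * (1 - glsProj R F)) by simp only [Matrix.mul_assoc],
        transpose_mul_mul_one_sub_glsProj hB, Matrix.mul_zero]
    rw [transpose_sub, transpose_one, Matrix.sub_mul, Matrix.sub_mul, hPtR, sub_zero,
      Matrix.one_mul, Matrix.mul_sub, Matrix.mul_one]
  · simp [glsProj, nonsing_inv_apply_not_isUnit _ hB]

theorem mulVec_dotProduct_mulVec_one_sub_glsProj_mulVec [DecidableEq ι] {R : Matrix ι ι α}
    {F : Matrix ι κ α} (hB : IsUnit (Fᵀ * R * F).det) (γ : κ → α) (x : ι → α) :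
    (F *ᵥ γ) ⬝ᵥ R *ᵥ ((1 - glsProj R F) *ᵥ x) = 0 := by
  rw [← vecMul_transpose, ← dotProduct_mulVec, mulVec_mulVec, mulVec_mulVec,
    transpose_mul_mul_one_sub_glsProj hB, zero_mulVec, dotProduct_zero]

end GLS

section Calculus

variable {ι κ : Type*} [Fintype ι] [Fintype κ] {t : ℝ}

theorem HasDerivAt.dotProduct {u v : ℝ → ι → ℝ} {u' v' : ι → ℝ} (hu : HasDerivAt u u' t)
    (hv : HasDerivAt v v' t) : HasDerivAt (fun t => u t ⬝ᵥ v t) (u' ⬝ᵥ v t + u t ⬝ᵥ v') t := by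
  have h := HasDerivAt.fun_sum (u := Finset.univ) fun i _ =>
    (hasDerivAt_pi.mp hu i).mul (hasDerivAt_pi.mp hv i)
  simp only [Pi.mul_apply, Finset.sum_add_distrib] at h
  exact h

theorem HasDerivAt.const_mulVec (M : Matrix ι κ ℝ) {v : ℝ → κ → ℝ} {v' : κ → ℝ}
    (hv : HasDerivAt v v' t) : HasDerivAt (fun t => M *ᵥ v t) (M *ᵥ v') t :=
  M.mulVecLin.toContinuousLinearMap.hasFDerivAt.comp_hasDerivAt t hv

theorem Matrix.differentiableAt_det [DecidableEq κ] {M : ℝ → Matrix κ κ ℝ}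
    (hM : ∀ i j, DifferentiableAt ℝ (fun t => M t i j) t) :
    DifferentiableAt ℝ (fun t => (M t).det) t := by
  simp only [det_apply']
  fun_prop

theorem Matrix.differentiableAt_inv_mulVec [DecidableEq κ] {M : ℝ → Matrix κ κ ℝ} {c : ℝ → κ → ℝ}
    (hM : ∀ i j, DifferentiableAt ℝ (fun t => M t i j) t) (hc : DifferentiableAt ℝ c t)
    (hdet : (M t).det ≠ 0) : DifferentiableAt ℝ (fun t => (M t)⁻¹ *ᵥ c t) t := by
  have cramer_rule : ∀ t, (M t)⁻¹ *ᵥ c t = (M t).det⁻¹ • cramer (M t) (c t) := fun t => by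
    rw [inv_def, smul_mulVec, cramer_eq_adjugate_mulVec, Ring.inverse_eq_inv']
  simp_rw [cramer_rule]
  refine ((differentiableAt_det hM).inv hdet).smul (differentiableAt_pi.mpr fun i => ?_)
  simp only [cramer_apply]
  refine differentiableAt_det fun j k => ?_
  by_cases hk : k = i
  · simpa [updateCol_apply, hk] using differentiableAt_pi.mp hc j
  · simpa [updateCol_apply, hk] using hM j k

end Calculus

section Model

variable {n p : ℕ} {W : Matrix (Fin n) (Fin n) ℝ}

theorem Rmat_transpose (hW : W.IsSymm) (ρ : ℝ) : (Rmat W ρ)ᵀ = Rmat W ρ := by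
  simp [Rmat, transpose_sub, hW.eq]

theorem Rmat_posDef (hW : W.IsSymm) (hW₀ : ∀ i j, 0 ≤ W i j)
    (hdeg : ∀ i, 0 < degVec W i) {ρ : ℝ} (hρ₀ : 0 ≤ ρ) (hρ₁ : ρ < 1) : (Rmat W ρ).PosDef := by
  have split : Rmat W ρ = (1 - ρ) • diagonal (degVec W) + ρ • (diagonal (degVec W) - W) := by
    rw [Rmat]; module
  rw [split]
  exact ((posDef_diagonal_iff.mpr hdeg).smul (sub_pos.mpr hρ₁)).add_posSemidef
    ((posSemidef_diagonal_sum_sub hW hW₀).smul hρ₀)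

theorem Tcrit_eq_sresid (hW : W.IsSymm) (F : Matrix (Fin n) (Fin (p + 1)) ℝ) (x : Fin n → ℝ)
    (ρ : ℝ) : Tcrit W F x ρ = sresid W F x ρ ⬝ᵥ Rmat W ρ *ᵥ sresid W F x ρ := by
  have hK : Kmat W F ρ = Rmat W ρ - Rmat W ρ * glsProj (Rmat W ρ) F := by
    simp only [Kmat, glsProj, Matrix.mul_assoc]
  rw [Tcrit, hK, sub_mul_glsProj_eq (Rmat_transpose hW ρ), ← mulVec_mulVec, ← mulVec_mulVec,
    dotProduct_mulVec, vecMul_transpose]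
  rfl

theorem exists_hasDerivAt_sresid (F : Matrix (Fin n) (Fin (p + 1)) ℝ) (x : Fin n → ℝ) {ρ : ℝ}
    (hB : IsUnit (Fᵀ * Rmat W ρ * F).det) : ∃ γ, HasDerivAt (sresid W F x) (F *ᵥ γ) ρ := by
  have affine : ∀ ρ, Fᵀ * Rmat W ρ = Fᵀ * diagonal (degVec W) - ρ • (Fᵀ * W) := fun ρ => by
    rw [Rmat, Matrix.mul_sub, Matrix.mul_smul]
  set β := fun ρ => (Fᵀ * Rmat W ρ * F)⁻¹ *ᵥ ((Fᵀ * Rmat W ρ) *ᵥ x)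
  have hs : sresid W F x = fun ρ => x - F *ᵥ β ρ := funext fun ρ => by
    simp only [sresid, sub_mulVec, one_mulVec, mulVec_mulVec, β, Matrix.mul_assoc]
  have hβ : DifferentiableAt ℝ β ρ := by
    refine differentiableAt_inv_mulVec (fun i j => ?_) ?_ hB.ne_zero
    · simp only [affine, Matrix.sub_mul, Matrix.sub_apply, smul_mul, Matrix.smul_apply, smul_eq_mul]
      fun_prop
    · simp only [affine, sub_mulVec, smul_mulVec]
      fun_prop
  refine ⟨-deriv β ρ, ?_⟩
  rw [hs, mulVec_neg]
  exact (hβ.hasDerivAt.const_mulVec F).const_sub x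

theorem HasDerivAt.dotProduct_Rmat_mulVec (hW : W.IsSymm) {s : ℝ → Fin n → ℝ} {s' : Fin n → ℝ}
    {ρ : ℝ} (hs : HasDerivAt s s' ρ) :
    HasDerivAt (fun ρ => s ρ ⬝ᵥ Rmat W ρ *ᵥ s ρ)
      (2 * (s' ⬝ᵥ Rmat W ρ *ᵥ s ρ) - s ρ ⬝ᵥ W *ᵥ s ρ) ρ := by
  have hRs : HasDerivAt (fun ρ => Rmat W ρ *ᵥ s ρ) (Rmat W ρ *ᵥ s' - W *ᵥ s ρ) ρ := by
    have h := (hs.const_mulVec (diagonal (degVec W))).fun_sub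
      ((hasDerivAt_id' ρ).fun_smul (hs.const_mulVec W))
    simp only [Rmat, sub_mulVec, smul_mulVec, one_smul] at h ⊢
    exact h.congr_deriv (sub_sub _ _ _).symm
  convert hs.dotProduct hRs using 1
  rw [dotProduct_sub, dotProduct_mulVec_comm_of_transpose_eq (Rmat_transpose hW ρ) (s ρ) s']
  ring

end Model

theorem hasDerivAt_T_general {n p : ℕ} (W : Matrix (Fin n) (Fin n) ℝ)
    (hWsymm : W.IsSymm) (hW01 : ∀ i j, W i j = 0 ∨ W i j = 1)
    (hdeg : ∀ i, 1 ≤ degVec W i)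
    (F : Matrix (Fin n) (Fin (p + 1)) ℝ) (hF : F.rank = p + 1)
    (x : Fin n → ℝ) (ρ₀ : ℝ) (hρ₀ : ρ₀ ∈ Set.Ioo (0 : ℝ) 1) :
    HasDerivAt (fun ρ => Tcrit W F x ρ)
      (-(sresid W F x ρ₀ ⬝ᵥ W.mulVec (sresid W F x ρ₀))) ρ₀ := by
  have hW₀ : ∀ i j, 0 ≤ W i j := fun i j => by rcases hW01 i j with h | h <;> simp [h]
  have hR : (Rmat W ρ₀).PosDef :=
    Rmat_posDef hWsymm hW₀ (fun i => one_pos.trans_le (hdeg i)) hρ₀.1.le hρ₀.2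
  have hFinj : Function.Injective F.mulVec :=
    mulVec_injective_of_rank_eq_card (by rwa [Fintype.card_fin])
  have hB : IsUnit (Fᵀ * Rmat W ρ₀ * F).det := by
    rw [← isUnit_iff_isUnit_det, ← conjTranspose_eq_transpose_of_trivial]
    exact (hR.conjTranspose_mul_mul_same hFinj).isUnit
  obtain ⟨γ, hs⟩ := exists_hasDerivAt_sresid F x hB
  have normal_eq : (F *ᵥ γ) ⬝ᵥ Rmat W ρ₀ *ᵥ sresid W F x ρ₀ = 0 :=
    mulVec_dotProduct_mulVec_one_sub_glsProj_mulVec hB γ x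
  simp_rw [Tcrit_eq_sresid hWsymm]
  convert hs.dotProduct_Rmat_mulVec hWsymm using 1
  rw [normal_eq]
  ring

/-- `ρ ↦ T(x,ρ)` is differentiable at `ρ₀ ∈ (0,1)` with derivative
`-s(ρ₀)ᵀ W s(ρ₀)`. -/
theorem hasDerivAt_T {n p : ℕ} (W : Matrix (Fin n) (Fin n) ℝ)
    (hWsymm : W.IsSymm) (hW01 : ∀ i j, W i j = 0 ∨ W i j = 1) (hWdiag : ∀ i, W i i = 0)
    (hdeg : ∀ i, 1 ≤ degVec W i)
    (F : Matrix (Fin n) (Fin (p + 1)) ℝ) (hF : F.rank = p + 1)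
    (x : Fin n → ℝ) (ρ₀ : ℝ) (hρ₀ : ρ₀ ∈ Set.Ioo (0 : ℝ) 1) :
    HasDerivAt (fun ρ => Tcrit W F x ρ)
      (-(sresid W F x ρ₀ ⬝ᵥ W.mulVec (sresid W F x ρ₀))) ρ₀ :=
  hasDerivAt_T_general W hWsymm hW01 hdeg F hF x ρ₀ hρ₀
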